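/- In a median graph G with a fixed basepoint v₀, for all vertices u, v with u ∈ I(v₀,v), the ladder set L_{u,v} is a POF; moreover, there exists a shortest (u,v)-path whose first |L_{u,v}| edges belong to the classes of L_{u,v}. -/

import Mathlib

namespace MedianPaper

variable {V : Type*}

/-- The metric interval `I(u,v)`: vertices on shortest `(u,v)`-paths. -/
def interval (G : SimpleGraph V) (u v : V) : Set V :=
  {w | G.dist u w + G.dist w v = G.dist u v}

/-- A median graph: a connected graph in which every triple of vertices
has a unique median. -/
def MedianGraph (G : SimpleGraph V) : Prop :=
  G.Connected ∧ ∀ x y z : V, ∃! m : V,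
    m ∈ interval G x y ∧ m ∈ interval G y z ∧ m ∈ interval G z x

/-- `u v x y` span a 4-cycle `u-v-y-x-u`, with opposite edge pairs
`(uv, xy)` and `(ux, vy)`. -/
def IsSquare (G : SimpleGraph V) (u v x y : V) : Prop :=
  G.Adj u v ∧ G.Adj x y ∧ G.Adj u x ∧ G.Adj v y ∧ u ≠ y ∧ v ≠ x

/-- Two edges are in relation Θ₀ if they are opposite edges of a common 4-cycle. -/
def Theta0 (G : SimpleGraph V) (e f : Sym2 V) : Prop :=
  ∃ u v x y : V, IsSquare G u v x y ∧ e = s(u, v) ∧ f = s(x, y)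

/-- Θ : the reflexive-transitive closure of Θ₀ on the edges of `G`. -/
def Theta (G : SimpleGraph V) (e f : Sym2 V) : Prop :=
  e ∈ G.edgeSet ∧ f ∈ G.edgeSet ∧ Relation.ReflTransGen (Theta0 G) e f

/-- The Θ-classes of `G`: equivalence classes of edges under Θ. -/
def ThetaClass (G : SimpleGraph V) (C : Set (Sym2 V)) : Prop :=
  ∃ e ∈ G.edgeSet, C = {f | Theta G e f}

/-- The edge set `C` separates `u` from `v` : they lie in different
components of `G` minus `C`. -/
def Separates (G : SimpleGraph V) (C : Set (Sym2 V)) (u v : V) : Prop :=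
  ¬ (G.deleteEdges C).Reachable u v

/-- The signature `σ_{u,v}`: Θ-classes separating `u` from `v`. -/
def signature (G : SimpleGraph V) (u v : V) : Set (Set (Sym2 V)) :=
  {C | ThetaClass G C ∧ Separates G C u v}

/-- `H`, `H'` are the two connected components (halfspaces) of `G` deprived
of the edges in `C`. -/
def IsHalfspacePair (G : SimpleGraph V) (C : Set (Sym2 V)) (H H' : Set V) : Prop :=
  H.Nonempty ∧ H'.Nonempty ∧ Disjoint H H' ∧ H ∪ H' = Set.univ ∧
  (∀ x ∈ H, ∀ y ∈ H, (G.deleteEdges C).Reachable x y) ∧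
  (∀ x ∈ H', ∀ y ∈ H', (G.deleteEdges C).Reachable x y) ∧
  (∀ x ∈ H, ∀ y ∈ H', ¬ (G.deleteEdges C).Reachable x y)

/-- The boundary of a halfspace `H` of the Θ-class `C` : vertices of `H`
incident to an edge of `C`. -/
def boundarySet (G : SimpleGraph V) (C : Set (Sym2 V)) (H : Set V) : Set V :=
  {x | x ∈ H ∧ ∃ y, G.Adj x y ∧ s(x, y) ∈ C}

/-- Orthogonality of Θ-classes: there is a common square using both. -/
def Orthogonal (G : SimpleGraph V) (C₁ C₂ : Set (Sym2 V)) : Prop :=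
  ∃ u v x y : V, IsSquare G u v x y ∧
    s(u, v) ∈ C₁ ∧ s(x, y) ∈ C₁ ∧ s(u, x) ∈ C₂ ∧ s(v, y) ∈ C₂

/-- A pairwise orthogonal family (POF) of Θ-classes. -/
def IsPOF (G : SimpleGraph V) (X : Set (Set (Sym2 V))) : Prop :=
  (∀ C ∈ X, ThetaClass G C) ∧
  ∀ C ∈ X, ∀ C' ∈ X, C ≠ C' → Orthogonal G C C'

/-- The `k`-dimensional hypercube graph, on subsets of `{1,…,k}`;
two subsets are adjacent iff their symmetric difference has one element. -/
def cubeGraph (k : ℕ) : SimpleGraph (Finset (Fin k)) where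
  Adj A B := (symmDiff A B).card = 1
  symm := by
    refine ⟨fun A B h => ?_⟩
    rwa [symmDiff_comm] at h
  loopless := by
    refine ⟨fun A h => ?_⟩
    simp [symmDiff_self] at h

/-- `S` induces a hypercube of dimension `k` in `G`. -/
def IsCubeDim (G : SimpleGraph V) (S : Set V) (k : ℕ) : Prop :=
  Nonempty ((G.induce S) ≃g cubeGraph k)

/-- `S` induces a hypercube in `G`. -/
def IsInducedCube (G : SimpleGraph V) (S : Set V) : Prop :=
  ∃ k, IsCubeDim G S k

/-- The dimension of `G` is `d`: the largest dimension of an induced hypercube. -/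
def GraphDim (G : SimpleGraph V) (d : ℕ) : Prop :=
  (∃ S : Set V, IsCubeDim G S d) ∧ ∀ (S : Set V) (k : ℕ), IsCubeDim G S k → k ≤ d

/-- The Θ-classes of the edges of the induced subgraph on `S`. -/
def cubeClasses (G : SimpleGraph V) (S : Set V) : Set (Set (Sym2 V)) :=
  {C | ThetaClass G C ∧ ∃ x ∈ S, ∃ y ∈ S, G.Adj x y ∧ s(x, y) ∈ C}

/-- With the `v₀`-orientation, `b ∈ S` is the basis of `S`: all edges of `S`
incident to `b` are outgoing from `b`. -/
def IsBasis (G : SimpleGraph V) (v₀ : V) (S : Set V) (b : V) : Prop :=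
  b ∈ S ∧ ∀ w ∈ S, G.Adj b w → G.dist v₀ b < G.dist v₀ w

/-- With the `v₀`-orientation, `b ∈ S` is the anti-basis of `S`: all edges of `S`
incident to `b` are ingoing to `b`. -/
def IsAntiBasis (G : SimpleGraph V) (v₀ : V) (S : Set V) (b : V) : Prop :=
  b ∈ S ∧ ∀ w ∈ S, G.Adj b w → G.dist v₀ w < G.dist v₀ b

/-- `ℰ⁻(v)` : the Θ-classes containing at least one edge ingoing to `v`. -/
def inClasses (G : SimpleGraph V) (v₀ v : V) : Set (Set (Sym2 V)) :=
  {C | ThetaClass G C ∧ ∃ u, G.Adj u v ∧ G.dist v₀ u < G.dist v₀ v ∧ s(u, v) ∈ C}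

/-- The ladder set `L_{u,v}`: classes of the signature `σ_{u,v}` having an
edge incident to `u`. -/
def ladder (G : SimpleGraph V) (u v : V) : Set (Set (Sym2 V)) :=
  {C | C ∈ signature G u v ∧ ∃ w, G.Adj u w ∧ s(u, w) ∈ C}

/-- A POF each of whose classes has an edge outgoing from `u`. -/
def OutgoingPOF (G : SimpleGraph V) (v₀ u : V) (L : Set (Set (Sym2 V))) : Prop :=
  IsPOF G L ∧ ∀ C ∈ L, ∃ w, G.Adj u w ∧ G.dist v₀ u < G.dist v₀ w ∧ s(u, w) ∈ C

/-- A POF each of whose classes has an edge ingoing to `u`. -/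
def IngoingPOF (G : SimpleGraph V) (v₀ u : V) (X : Set (Set (Sym2 V))) : Prop :=
  IsPOF G X ∧ ∀ C ∈ X, ∃ w, G.Adj w u ∧ G.dist v₀ w < G.dist v₀ u ∧ s(w, u) ∈ C

/-- `m` is a median of the triple `x, y, z`. -/
def IsMedian (G : SimpleGraph V) (x y z m : V) : Prop :=
  m ∈ interval G x y ∧ m ∈ interval G y z ∧ m ∈ interval G z x

/-- `b` is the milestone following `a` on the way to `v`: `b` is the anti-basis of
the induced hypercube with basis `a` whose Θ-classes are the ladder set `L_{a,v}`. -/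
def NextMilestone (G : SimpleGraph V) (v₀ v a b : V) : Prop :=
  ∃ S : Set V, IsInducedCube G S ∧ IsBasis G v₀ S a ∧ IsAntiBasis G v₀ S b ∧
    cubeClasses G S = ladder G a v

/-- The milestone set `Π(u,v)`: vertices obtained from `u` by iterating the
next-milestone step towards `v`. -/
def MilestoneSet (G : SimpleGraph V) (v₀ u v : V) : Set V :=
  {p | Relation.ReflTransGen (fun a b => NextMilestone G v₀ v a b) u p}

/-- The penultimate milestone `π̄(u,v)`: the milestone of `Π(u,v)` other than `v`
closest to `v`, i.e. whose next milestone is `v` itself. -/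
def IsPenultimate (G : SimpleGraph V) (v₀ u v p : V) : Prop :=
  p ∈ MilestoneSet G v₀ u v ∧ p ≠ v ∧ NextMilestone G v₀ v p v

/-- A convex set of vertices. -/
def ConvexSet (G : SimpleGraph V) (H : Set V) : Prop :=
  ∀ u ∈ H, ∀ v ∈ H, interval G u v ⊆ H

/-- A gated set of vertices: each vertex has a gate in `H`. -/
def GatedSet (G : SimpleGraph V) (H : Set V) : Prop :=
  ∀ x : V, ∃ g ∈ H, ∀ h ∈ H, g ∈ interval G x h

/-!
An edge `uw` of a class `C ∈ σ_{u,v}` must point towards `v`: otherwise `u` and `v` lie on the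
same side of `uw`. In a median graph opposite edges of a square are oriented alike with respect
to every vertex, so being on the same side propagates along Θ₀ to every edge of `C`, and then a
geodesic from `u` to `v` avoids `C`, contradicting separation. Hence two ladder classes give two
neighbours `w, w'` of `u` closer to `v`, and the median of `w, w', v` closes a square on `uw, uw'`:
the classes are orthogonal. That square also shows that the remaining ladder classes stay in
`L_{w,v}` after stepping along `uw`, so the prefix is built by induction on the ladder set.
-/

open SimpleGraph

variable {G : SimpleGraph V}

theorem mem_interval {u v w : V} :
    w ∈ interval G u v ↔ G.dist u w + G.dist w v = G.dist u v := Iff.rfl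

theorem IsSquare.swap {a b c e : V} (h : IsSquare G a b c e) : IsSquare G c e a b :=
  ⟨h.2.1, h.1, h.2.2.1.symm, h.2.2.2.1.symm, h.2.2.2.2.2.symm, h.2.2.2.2.1.symm⟩

theorem IsSquare.transpose {a b c e : V} (h : IsSquare G a b c e) : IsSquare G a c b e :=
  ⟨h.2.2.1, h.2.2.2.1, h.1, h.2.1, h.2.2.2.2.1, h.2.2.2.2.2.symm⟩

theorem IsSquare.theta0 {a b c e : V} (h : IsSquare G a b c e) : Theta0 G s(a, b) s(c, e) :=
  ⟨a, b, c, e, h, rfl, rfl⟩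

instance : Std.Symm (Theta0 G) where
  symm := by
    rintro f g ⟨a, b, c, e, hsq, rfl, rfl⟩
    exact hsq.swap.theta0

theorem Theta0.mem_edgeSet_right {f g : Sym2 V} (h : Theta0 G f g) : g ∈ G.edgeSet := by
  obtain ⟨a, b, c, e, hsq, -, rfl⟩ := h
  exact hsq.2.1

namespace MedianGraph

theorem connected (hmed : MedianGraph G) : G.Connected := hmed.1

theorem exists_isMedian (hmed : MedianGraph G) (x y z : V) : ∃ m, IsMedian G x y z m :=
  (hmed.2 x y z).exists

theorem isMedian_unique (hmed : MedianGraph G) {x y z m m' : V} (hm : IsMedian G x y z m)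
    (hm' : IsMedian G x y z m') : m = m' :=
  (hmed.2 x y z).unique hm hm'

/-- Median graphs are bipartite. -/
theorem dist_ne_of_adj (hmed : MedianGraph G) {a b : V} (hab : G.Adj a b) (x : V) :
    G.dist x a ≠ G.dist x b := by
  intro hx
  obtain ⟨m, hm_ab, hm_bx, hm_xa⟩ := hmed.exists_isMedian a b x
  simp only [mem_interval] at hm_ab hm_bx hm_xa
  have hab1 : G.dist a b = 1 := dist_eq_one_iff_adj.mpr hab
  have hba1 : G.dist b a = 1 := dist_eq_one_iff_adj.mpr hab.symm
  have hxa : G.dist x a = G.dist a x := dist_comm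
  have hxb : G.dist x b = G.dist b x := dist_comm
  rcases (show G.dist a m = 0 ∨ G.dist m b = 0 by omega) with h | h
  · obtain rfl := hmed.connected.dist_eq_zero_iff.mp h
    omega
  · obtain rfl := hmed.connected.dist_eq_zero_iff.mp h
    omega

theorem dist_adj_cases (hmed : MedianGraph G) {a b : V} (hab : G.Adj a b) (x : V) :
    G.dist x b = G.dist x a + 1 ∨ G.dist x a = G.dist x b + 1 := by
  have := hmed.dist_ne_of_adj hab x
  rcases hab.diff_dist_adj (u := x) with h | h | h <;> omega

theorem dist_eq_two_of_adj_of_adj (hmed : MedianGraph G) {u w₁ w₂ : V} (h₁ : G.Adj u w₁)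
    (h₂ : G.Adj u w₂) (hne : w₁ ≠ w₂) : G.dist w₁ w₂ = 2 := by
  have hu : G.dist w₁ u = 1 := dist_eq_one_iff_adj.mpr h₁.symm
  have h0 : G.dist w₁ w₂ ≠ 0 := fun h => hne (hmed.connected.dist_eq_zero_iff.mp h)
  rcases hmed.dist_adj_cases h₂ w₁ with h | h <;> omega

/-- The quadrangle condition. -/
theorem exists_isSquare_of_dist_eq_succ (hmed : MedianGraph G) {u w₁ w₂ v : V}
    (h₁ : G.Adj u w₁) (h₂ : G.Adj u w₂) (hne : w₁ ≠ w₂)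
    (hd₁ : G.dist u v = G.dist w₁ v + 1) (hd₂ : G.dist u v = G.dist w₂ v + 1) :
    ∃ m, IsSquare G u w₁ w₂ m := by
  obtain ⟨m, hm₁₂, hm₂v, hmv₁⟩ := hmed.exists_isMedian w₁ w₂ v
  simp only [mem_interval] at hm₁₂ hm₂v hmv₁
  have h₁₂ : G.dist w₁ w₂ = 2 := hmed.dist_eq_two_of_adj_of_adj h₁ h₂ hne
  have h₂₁ : G.dist w₂ w₁ = 2 := dist_comm.trans h₁₂
  have hv₁ : G.dist v w₁ = G.dist w₁ v := dist_comm
  have hv₂ : G.dist v w₂ = G.dist w₂ v := dist_comm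
  have hvm : G.dist v m = G.dist m v := dist_comm
  have hm₁ : G.dist w₁ m ≠ 0 := fun h => by
    obtain rfl := hmed.connected.dist_eq_zero_iff.mp h
    omega
  have hm₂ : G.dist m w₂ ≠ 0 := fun h => by
    obtain rfl := hmed.connected.dist_eq_zero_iff.mp h
    omega
  have hum : u ≠ m := by
    rintro rfl
    omega
  refine ⟨m, h₁, dist_eq_one_iff_adj.mp (by rw [dist_comm]; omega), h₂,
    dist_eq_one_iff_adj.mp (by omega), hum, hne⟩

theorem dist_lt_of_isSquare (hmed : MedianGraph G) {a b c e : V} (hsq : IsSquare G a b c e)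
    {z : V} (h : G.dist z a < G.dist z b) : G.dist z c < G.dist z e := by
  obtain ⟨hab, hce, hac, hbe, hae, hbc⟩ := hsq
  by_contra hce'
  have hzb : G.dist z b = G.dist z a + 1 := by
    rcases hmed.dist_adj_cases hab z with h' | h' <;> omega
  have hzc : G.dist z c = G.dist z e + 1 := by
    rcases hmed.dist_adj_cases hce z with h' | h' <;> omega
  rcases hmed.dist_adj_cases hac z with hzac | hzac
  · -- then `a` and `e` are both medians of `b, c, z`
    have hbc2 : G.dist b c = 2 := hmed.dist_eq_two_of_adj_of_adj hab hac hbc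
    have dab : G.dist a b = 1 := dist_eq_one_iff_adj.mpr hab
    have dba : G.dist b a = 1 := dist_eq_one_iff_adj.mpr hab.symm
    have dac : G.dist a c = 1 := dist_eq_one_iff_adj.mpr hac
    have dca : G.dist c a = 1 := dist_eq_one_iff_adj.mpr hac.symm
    have dbe : G.dist b e = 1 := dist_eq_one_iff_adj.mpr hbe
    have deb : G.dist e b = 1 := dist_eq_one_iff_adj.mpr hbe.symm
    have dec : G.dist e c = 1 := dist_eq_one_iff_adj.mpr hce.symm
    have dce : G.dist c e = 1 := dist_eq_one_iff_adj.mpr hce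
    have daz : G.dist a z = G.dist z a := dist_comm
    have dez : G.dist e z = G.dist z e := dist_comm
    have dcz : G.dist c z = G.dist z c := dist_comm
    have hma : IsMedian G b c z a := by
      refine ⟨?_, ?_, ?_⟩ <;> rw [mem_interval] <;> omega
    have hme : IsMedian G b c z e := by
      refine ⟨?_, ?_, ?_⟩ <;> rw [mem_interval] <;> omega
    exact hae (hmed.isMedian_unique hma hme)
  · rcases hmed.dist_adj_cases hbe z with h' | h' <;> omega

theorem dist_lt_iff_of_isSquare (hmed : MedianGraph G) {a b c e : V}
    (hsq : IsSquare G a b c e) (z : V) : G.dist z a < G.dist z b ↔ G.dist z c < G.dist z e :=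
  ⟨hmed.dist_lt_of_isSquare hsq, hmed.dist_lt_of_isSquare hsq.swap⟩

end MedianGraph

namespace ThetaClass

variable {C C' : Set (Sym2 V)}

theorem reflTransGen_of_mem (hC : ThetaClass G C) {f g : Sym2 V} (hf : f ∈ C) (hg : g ∈ C) :
    Relation.ReflTransGen (Theta0 G) f g := by
  obtain ⟨e, -, rfl⟩ := hC
  exact (Std.Symm.symm _ _ hf.2.2).trans hg.2.2

theorem mem_of_theta0 (hC : ThetaClass G C) {f g : Sym2 V} (hf : f ∈ C) (h : Theta0 G f g) :
    g ∈ C := by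
  obtain ⟨e, -, rfl⟩ := hC
  exact ⟨hf.1, h.mem_edgeSet_right, hf.2.2.tail h⟩

theorem eq_of_mem (hC : ThetaClass G C) (hC' : ThetaClass G C') {g : Sym2 V} (hg : g ∈ C)
    (hg' : g ∈ C') : C = C' := by
  obtain ⟨e, he, rfl⟩ := hC
  obtain ⟨e', he', rfl⟩ := hC'
  ext f
  exact ⟨fun hf => ⟨he', hf.2.1, hg'.2.2.trans ((Std.Symm.symm _ _ hg.2.2).trans hf.2.2)⟩,
    fun hf => ⟨he, hf.2.1, hg.2.2.trans ((Std.Symm.symm _ _ hg'.2.2).trans hf.2.2)⟩⟩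

end ThetaClass

def SameSide (G : SimpleGraph V) (u v : V) (f : Sym2 V) : Prop :=
  ∀ a b, f = s(a, b) → (G.dist u a < G.dist u b ↔ G.dist v a < G.dist v b)

theorem SameSide.of_theta0 (hmed : MedianGraph G) {u v : V} {f g : Sym2 V} (h : Theta0 G f g)
    (hf : SameSide G u v f) : SameSide G u v g := by
  obtain ⟨a, b, c, e, hsq, rfl, rfl⟩ := h
  have hce : G.dist u c < G.dist u e ↔ G.dist v c < G.dist v e := by
    rw [← hmed.dist_lt_iff_of_isSquare hsq, ← hmed.dist_lt_iff_of_isSquare hsq]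
    exact hf a b rfl
  have hu := hmed.dist_ne_of_adj hsq.2.1 u
  have hv := hmed.dist_ne_of_adj hsq.2.1 v
  intro c' e' hc'e'
  rcases Sym2.eq_iff.mp hc'e' with ⟨rfl, rfl⟩ | ⟨rfl, rfl⟩
  · exact hce
  · omega

theorem SameSide.of_reflTransGen (hmed : MedianGraph G) {u v : V} {f g : Sym2 V}
    (h : Relation.ReflTransGen (Theta0 G) f g) (hf : SameSide G u v f) : SameSide G u v g := by
  induction h with
  | refl => exact hf
  | tail _ h ih => exact ih.of_theta0 hmed h

theorem ThetaClass.sameSide (hmed : MedianGraph G) {C : Set (Sym2 V)} (hC : ThetaClass G C)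
    {u v : V} {f : Sym2 V} (hf : f ∈ C) (hside : SameSide G u v f) :
    ∀ g ∈ C, SameSide G u v g :=
  fun _ hg => hside.of_reflTransGen hmed (hC.reflTransGen_of_mem hf hg)

/-- Along a geodesic from `x ∈ I(u,v)` to `v`, every step moves away from `u` and towards `v`. -/
theorem not_sameSide_of_mem_edges (hconn : G.Connected) {u v x : V} (p : G.Walk x v)
    (hp : p.length = G.dist x v) (hx : x ∈ interval G u v) :
    ∀ f ∈ p.edges, ¬SameSide G u v f := by
  induction p with
  | nil => simp
  | @cons x y v hxy q ih =>
    rw [mem_interval] at hx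
    have hxy1 : G.dist x y = 1 := dist_eq_one_iff_adj.mpr hxy
    have hyv : G.dist y v ≤ q.length := dist_le q
    have hxv : G.dist x v ≤ G.dist x y + G.dist y v := hconn.dist_triangle
    have huy : G.dist u y ≤ G.dist u x + G.dist x y := hconn.dist_triangle
    have huv : G.dist u v ≤ G.dist u y + G.dist y v := hconn.dist_triangle
    have hvx : G.dist v x = G.dist x v := dist_comm
    have hvy : G.dist v y = G.dist y v := dist_comm
    rw [Walk.length_cons] at hp
    rintro f (⟨⟩ | ⟨-, hf⟩)
    · intro hside
      have := hside x y rfl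
      omega
    · exact ih (by omega) (by rw [mem_interval]; omega) f hf

theorem Separates.exists_mem_edges {C : Set (Sym2 V)} {u v : V} (hsep : Separates G C u v)
    (p : G.Walk u v) : ∃ f ∈ p.edges, f ∈ C := by
  by_contra! h
  exact hsep ⟨p.toDeleteEdges C h⟩

theorem not_separates_of_forall_sameSide (hconn : G.Connected) {C : Set (Sym2 V)} {u v : V}
    (hside : ∀ f ∈ C, SameSide G u v f) : ¬Separates G C u v := by
  intro hsep
  obtain ⟨p, hp⟩ := hconn.exists_walk_length_eq_dist u v
  obtain ⟨f, hfp, hfC⟩ := hsep.exists_mem_edges p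
  exact not_sameSide_of_mem_edges hconn p hp (by simp [mem_interval]) f hfp (hside f hfC)

theorem signature_finite (hconn : G.Connected) (u v : V) : (signature G u v).Finite := by
  obtain ⟨p⟩ := hconn.preconnected u v
  have hcover : signature G u v ⊆ ⋃ f ∈ {f | f ∈ p.edges}, {C | ThetaClass G C ∧ f ∈ C} := by
    rintro C ⟨hC, hsep⟩
    obtain ⟨f, hfp, hfC⟩ := hsep.exists_mem_edges p
    exact Set.mem_biUnion hfp ⟨hC, hfC⟩
  refine (p.edges.finite_toSet.biUnion fun f _ => Set.Subsingleton.finite ?_).subset hcover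
  exact fun C hC C' hC' => hC.1.eq_of_mem hC'.1 hC.2 hC'.2

theorem dist_eq_succ_of_mem_signature (hmed : MedianGraph G) {C : Set (Sym2 V)} {u v w : V}
    (hC : C ∈ signature G u v) (huw : G.Adj u w) (hw : s(u, w) ∈ C) :
    G.dist u v = G.dist w v + 1 := by
  have hvu : G.dist v u = G.dist u v := dist_comm
  have hvw : G.dist v w = G.dist w v := dist_comm
  have huw1 : G.dist u w = 1 := dist_eq_one_iff_adj.mpr huw
  rcases hmed.dist_adj_cases huw v with hfar | hnear
  · have hside : SameSide G u v s(u, w) := by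
      intro a b hab
      rcases Sym2.eq_iff.mp hab with ⟨rfl, rfl⟩ | ⟨rfl, rfl⟩ <;> simp only [dist_self] <;> omega
    exact (not_separates_of_forall_sameSide hmed.connected (hC.1.sameSide hmed hw hside) hC.2).elim
  · omega

theorem exists_isSquare_of_mem_signature (hmed : MedianGraph G) {C C' : Set (Sym2 V)}
    {u v w w' : V} (hC : C ∈ signature G u v) (hC' : C' ∈ signature G u v) (hne : C ≠ C')
    (huw : G.Adj u w) (hw : s(u, w) ∈ C) (huw' : G.Adj u w') (hw' : s(u, w') ∈ C') :
    ∃ m, IsSquare G u w w' m ∧ s(w', m) ∈ C ∧ s(w, m) ∈ C' := by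
  have hww' : w ≠ w' := by
    rintro rfl
    exact hne (hC.1.eq_of_mem hC'.1 hw hw')
  obtain ⟨m, hsq⟩ := hmed.exists_isSquare_of_dist_eq_succ huw huw' hww'
    (dist_eq_succ_of_mem_signature hmed hC huw hw)
    (dist_eq_succ_of_mem_signature hmed hC' huw' hw')
  exact ⟨m, hsq, hC.1.mem_of_theta0 hw hsq.theta0, hC'.1.mem_of_theta0 hw' hsq.transpose.theta0⟩

theorem isPOF_ladder (hmed : MedianGraph G) (u v : V) : IsPOF G (ladder G u v) := by
  refine ⟨fun C hC => hC.1.1, ?_⟩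
  rintro C ⟨hC, w, huw, hw⟩ C' ⟨hC', w', huw', hw'⟩ hne
  obtain ⟨m, hsq, hmC, hmC'⟩ :=
    exists_isSquare_of_mem_signature hmed hC hC' hne huw hw huw' hw'
  exact ⟨u, w, w', m, hsq, hw, hmC, hw', hmC'⟩

theorem ladder_diff_subset (hmed : MedianGraph G) {C : Set (Sym2 V)} {u v w : V}
    (hC : C ∈ signature G u v) (huw : G.Adj u w) (hw : s(u, w) ∈ C) :
    ladder G u v \ {C} ⊆ ladder G w v := by
  rintro C' ⟨⟨hC', w', huw', hw'⟩, hC'C⟩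
  have hne : C ≠ C' := Ne.symm hC'C
  have hsep : Separates G C' w v := fun hwv => by
    have huw_del : (G.deleteEdges C').Adj u w :=
      (deleteEdges_adj ..).mpr ⟨huw, fun h => hne (hC.1.eq_of_mem hC'.1 hw h)⟩
    exact hC'.2 (huw_del.reachable.trans hwv)
  obtain ⟨m, hsq, -, hmC'⟩ := exists_isSquare_of_mem_signature hmed hC hC' hne huw hw huw' hw'
  exact ⟨⟨hC'.1, hsep⟩, m, hsq.2.2.2.1, hmC'⟩

theorem exists_geodesic_take_edges_mem (hmed : MedianGraph G) (v : V)
    {M : Set (Set (Sym2 V))} (hM : M.Finite) :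
    ∀ u, M ⊆ ladder G u v → ∃ p : G.Walk u v, p.length = G.dist u v ∧
      ∀ f ∈ p.edges.take M.ncard, ∃ C ∈ M, f ∈ C := by
  induction M, hM using Set.Finite.induction_on with
  | empty =>
    intro u _
    obtain ⟨p, hp⟩ := hmed.connected.exists_walk_length_eq_dist u v
    exact ⟨p, hp, by simp⟩
  | @insert C M hCM hM ih =>
    intro u hsub
    obtain ⟨hC, w, huw, hw⟩ := hsub (Set.mem_insert C M)
    obtain ⟨p, hp, hpM⟩ := ih w fun C' hC' => ladder_diff_subset hmed hC huw hw
      ⟨hsub (Set.mem_insert_of_mem C hC'), ne_of_mem_of_not_mem hC' hCM⟩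
    refine ⟨.cons huw p, ?_, ?_⟩
    · rw [Walk.length_cons, hp, dist_eq_succ_of_mem_signature hmed hC huw hw]
    · rw [Set.ncard_insert_of_notMem hCM hM, Walk.edges_cons, List.take_succ_cons]
      rintro f (⟨⟩ | ⟨-, hf⟩)
      · exact ⟨C, Set.mem_insert C M, hw⟩
      · obtain ⟨C', hC', hfC'⟩ := hpM f hf
        exact ⟨C', Set.mem_insert_of_mem C hC', hfC'⟩

theorem ladder_is_pof_and_prefix_general {V : Type*} (G : SimpleGraph V)
    (hmed : MedianGraph G) (u v : V) :
    IsPOF G (ladder G u v) ∧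
    ∃ p : G.Walk u v, p.length = G.dist u v ∧
      ∀ e ∈ p.edges.take (ladder G u v).ncard, ∃ C ∈ ladder G u v, e ∈ C :=
  ⟨isPOF_ladder hmed u v, exists_geodesic_take_edges_mem hmed v
    ((signature_finite hmed.connected u v).subset fun _ hC => hC.1) u subset_rfl⟩

/-- In a median graph with basepoint `v₀`, if `u ∈ I(v₀,v)` then
the ladder set `L_{u,v}` is a POF, and some shortest `(u,v)`-path starts with
`|L_{u,v}|` edges whose classes belong to `L_{u,v}`. -/
theorem ladder_is_pof_and_prefix {V : Type*} [Fintype V] (G : SimpleGraph V)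
    (hmed : MedianGraph G) (v₀ u v : V) (hu : u ∈ interval G v₀ v) :
    IsPOF G (ladder G u v) ∧
    ∃ p : G.Walk u v, p.length = G.dist u v ∧
      ∀ e ∈ p.edges.take (ladder G u v).ncard, ∃ C ∈ ladder G u v, e ∈ C :=
  ladder_is_pof_and_prefix_general G hmed u v

end MedianPaper
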